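/- Let l ≥ 5. Realize the root system Φ of type D_l concretely as Φ = {±eᵢ ± eⱼ : 1 ≤ i < j ≤ l} ⊂ ℚˡ with the standard inner product ⟨·,·⟩, let δ = e₁ + e₂, Φ₀ = {α ∈ Φ : ⟨α, δ⟩ = 0}, Φ₁ = {α ∈ Φ : ⟨α, δ⟩ = 1}, and let W₀ be the group generated by the reflections s_α for α ∈ Φ₀. Then the action of W₀ on the collection of 2-element subsets {α, β} ⊆ Φ₁ with ⟨α, β⟩ = 0 has exactly two orbits. -/

import Mathlib

/-- The standard inner product on `ℚˡ`. -/
def ip {l : ℕ} (x y : Fin l → ℚ) : ℚ := ∑ i, x i * y i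

/-- The standard basis vector `eᵢ` of `ℚˡ`. -/
def ev {l : ℕ} (i : Fin l) : Fin l → ℚ := Pi.single i 1

/-- The root system of type `D_l`: `Φ = {±eᵢ ± eⱼ : i < j}`. -/
def PhiD (l : ℕ) : Set (Fin l → ℚ) :=
  {α | ∃ i j : Fin l, i < j ∧
    (α = ev i + ev j ∨ α = ev i - ev j ∨ α = -ev i + ev j ∨ α = -ev i - ev j)}

/-- The maximal root `δ = e₁ + e₂` of `D_l`. -/
def deltaD (l : ℕ) (hl : 4 ≤ l) : Fin l → ℚ :=
  ev ⟨0, by omega⟩ + ev ⟨1, by omega⟩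

/-- The roots orthogonal to `δ`. -/
def Phi0D (l : ℕ) (hl : 4 ≤ l) : Set (Fin l → ℚ) :=
  {α ∈ PhiD l | ip α (deltaD l hl) = 0}

/-- The roots with `⟨α, δ⟩ = 1`. -/
def Phi1D (l : ℕ) (hl : 4 ≤ l) : Set (Fin l → ℚ) :=
  {α ∈ PhiD l | ip α (deltaD l hl) = 1}

/-- The group `W₀` generated by the reflections `s_α`, `α ∈ Φ₀`. -/
def W0D (l : ℕ) (hl : 4 ≤ l) : Subgroup ((Fin l → ℚ) ≃ₗ[ℚ] (Fin l → ℚ)) :=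
  Subgroup.closure
    {g | ∃ α ∈ Phi0D l hl, ∀ x, g x = x - (2 * ip x α / ip α α) • α}

/-- The collection of 2-element subsets of `Φ₁` consisting of orthogonal roots. -/
def OrthPairsD (l : ℕ) (hl : 4 ≤ l) : Set (Set (Fin l → ℚ)) :=
  {S | S ⊆ Phi1D l hl ∧ S.ncard = 2 ∧ ∀ α ∈ S, ∀ β ∈ S, α ≠ β → ip α β = 0}

/-- `S` and `T` lie in the same `W₀`-orbit (elementwise action on subsets). -/
def SameW0OrbitD (l : ℕ) (hl : 4 ≤ l) (S T : Set (Fin l → ℚ)) : Prop :=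
  ∃ w ∈ W0D l hl, (fun x => w x) '' S = T

/-!
Indices start at `0`, so `δ = e₀ + e₁`. Every root of `Φ₁` is `e_a ± e_k` with `a < 2 ≤ k`, hence an
orthogonal pair in `Φ₁` is either `{e_a + e_k, e_a - e_k}` or `{e₀ ± e_k, e₁ ± e_m}` with `k ≠ m`.
The transpositions of two coordinates `≥ 2`, the transposition of `0` and `1`, and the sign changes
of two coordinates `≥ 2` lie in `W₀`; they move every pair of either kind to a fixed representative
(changing a single sign needs a third coordinate `≥ 2`, whence `l ≥ 5`). Each generator `s_α` of
`W₀` is either the reflection in `γ = e₀ - e₁` (when `α = ±γ`) or fixes `⟨·, γ⟩` (when `α ⊥ γ`), so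
`⟨v, γ⟩²` is `W₀`-invariant; on the sum of the pair it is `4` for the first kind and `0` for the
second.
-/

open Matrix

variable {l : ℕ}

lemma ip_eq_dotProduct (x y : Fin l → ℚ) : ip x y = x ⬝ᵥ y := rfl

lemma ip_comm (x y : Fin l → ℚ) : ip x y = ip y x := dotProduct_comm x y

lemma ip_ev_right (x : Fin l → ℚ) (i : Fin l) : ip x (ev i) = x i := by
  simp [ip_eq_dotProduct, ev]

lemma ev_apply (i c : Fin l) : ev i c = if c = i then 1 else 0 := Pi.single_apply i 1 c

lemma ip_smul_add_smul (σ τ : ℚ) (i j : Fin l) (x : Fin l → ℚ) :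
    ip (σ • ev i + τ • ev j) x = σ * x i + τ * x j := by
  simp [ip_eq_dotProduct, add_dotProduct, smul_dotProduct, ev]

lemma ip_sub_smul (x y z : Fin l → ℚ) (c : ℚ) : ip (x - c • y) z = ip x z - c * ip y z := by
  simp [ip_eq_dotProduct, sub_dotProduct, smul_dotProduct]

lemma ip_ev_add_smul_ev {a k b m : Fin l} (ham : a ≠ m) (hkb : k ≠ b) (ε τ : ℚ) :
    ip (ev a + ε • ev k) (ev b + τ • ev m) =
      (if a = b then 1 else 0) + ε * τ * (if k = m then 1 else 0) := by
  rw [← one_smul ℚ (ev a), ip_smul_add_smul]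
  simp [ev_apply, ham, hkb]

lemma deltaD_apply (hl : 4 ≤ l) (c : Fin l) :
    deltaD l hl c = if (c : ℕ) < 2 then 1 else 0 := by
  simp only [deltaD, Pi.add_apply, ev_apply, Fin.ext_iff]
  split_ifs <;> norm_num <;> omega

lemma deltaD_eq_of_two_le (hl : 4 ≤ l) {i j : Fin l} (hi : 2 ≤ (i : ℕ)) (hj : 2 ≤ (j : ℕ)) :
    deltaD l hl i = deltaD l hl j := by
  simp [deltaD_apply, show ¬ (i : ℕ) < 2 by omega, show ¬ (j : ℕ) < 2 by omega]

lemma ne_of_val_lt_two {a k : Fin l} (ha : (a : ℕ) < 2) (hk : 2 ≤ (k : ℕ)) : a ≠ k :=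
  Fin.ne_of_val_ne (by omega)

lemma exists_eq_smul_add_smul_of_mem_PhiD {v : Fin l → ℚ} (hv : v ∈ PhiD l) :
    ∃ (i j : Fin l) (σ τ : ℚ), i < j ∧ (σ = 1 ∨ σ = -1) ∧ (τ = 1 ∨ τ = -1) ∧
      v = σ • ev i + τ • ev j := by
  obtain ⟨i, j, hij, rfl | rfl | rfl | rfl⟩ := hv
  · exact ⟨i, j, 1, 1, hij, by simp, by simp, by module⟩
  · exact ⟨i, j, 1, -1, hij, by simp, by simp, by module⟩
  · exact ⟨i, j, -1, 1, hij, by simp, by simp, by module⟩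
  · exact ⟨i, j, -1, -1, hij, by simp, by simp, by module⟩

lemma ip_self_of_mem_PhiD {v : Fin l → ℚ} (hv : v ∈ PhiD l) : ip v v = 2 := by
  obtain ⟨i, j, σ, τ, hij, hσ, hτ, rfl⟩ := exists_eq_smul_add_smul_of_mem_PhiD hv
  rw [ip_smul_add_smul]
  simp [ev_apply, hij.ne, hij.ne']
  rcases hσ with rfl | rfl <;> rcases hτ with rfl | rfl <;> norm_num

lemma ev_sub_ev_mem_PhiD {i j : Fin l} (h : i ≠ j) : ev i - ev j ∈ PhiD l := by
  rcases h.lt_or_gt with hij | hji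
  · exact ⟨i, j, hij, Or.inr (Or.inl rfl)⟩
  · exact ⟨j, i, hji, Or.inr (Or.inr (Or.inl (by abel)))⟩

lemma ev_add_ev_mem_PhiD {i j : Fin l} (h : i ≠ j) : ev i + ev j ∈ PhiD l := by
  rcases h.lt_or_gt with hij | hji
  · exact ⟨i, j, hij, Or.inl rfl⟩
  · exact ⟨j, i, hji, Or.inl (add_comm _ _)⟩

lemma mem_Phi1D_iff (hl : 4 ≤ l) {v : Fin l → ℚ} :
    v ∈ Phi1D l hl ↔ ∃ (a k : Fin l) (ε : ℚ), (a : ℕ) < 2 ∧ 2 ≤ (k : ℕ) ∧ (ε = 1 ∨ ε = -1) ∧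
      v = ev a + ε • ev k := by
  constructor
  · rintro ⟨hv, hδ⟩
    obtain ⟨i, j, σ, τ, hij, hσ, hτ, rfl⟩ := exists_eq_smul_add_smul_of_mem_PhiD hv
    rw [Fin.lt_def] at hij
    rw [ip_smul_add_smul, deltaD_apply, deltaD_apply] at hδ
    by_cases hi : (i : ℕ) < 2 <;> by_cases hj : (j : ℕ) < 2 <;>
      simp only [hi, hj, if_true, if_false] at hδ
    · rcases hσ with rfl | rfl <;> rcases hτ with rfl | rfl <;> norm_num at hδ
    · exact ⟨i, j, τ, hi, by omega, hτ, by rw [show σ = 1 by simpa using hδ, one_smul]⟩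
    · omega
    · norm_num at hδ
  · rintro ⟨a, k, ε, ha, hk, hε, rfl⟩
    have hak : a < k := by rw [Fin.lt_def]; omega
    refine ⟨?_, ?_⟩
    · rcases hε with rfl | rfl
      · exact ⟨a, k, hak, Or.inl (by rw [one_smul])⟩
      · exact ⟨a, k, hak, Or.inr (Or.inl (by rw [neg_one_smul, sub_eq_add_neg]))⟩
    · rw [← one_smul ℚ (ev a), ip_smul_add_smul, deltaD_apply, deltaD_apply]
      simp [ha, show ¬ (k : ℕ) < 2 by omega]

lemma ip_eq_zero_or_eq_or_eq_neg_of_mem_Phi0D (hl : 4 ≤ l) {α : Fin l → ℚ}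
    (hα : α ∈ Phi0D l hl) :
    ip α (ev ⟨0, by omega⟩ - ev ⟨1, by omega⟩) = 0 ∨ α = ev ⟨0, by omega⟩ - ev ⟨1, by omega⟩ ∨
      α = -(ev ⟨0, by omega⟩ - ev ⟨1, by omega⟩) := by
  obtain ⟨hv, hδ⟩ := hα
  obtain ⟨i, j, σ, τ, hij, hσ, hτ, rfl⟩ := exists_eq_smul_add_smul_of_mem_PhiD hv
  rw [Fin.lt_def] at hij
  rw [ip_smul_add_smul, deltaD_apply, deltaD_apply] at hδ
  by_cases hi : (i : ℕ) < 2 <;> by_cases hj : (j : ℕ) < 2 <;>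
    simp only [hi, hj, if_true, if_false, mul_one, mul_zero] at hδ
  · have hl0 : 0 < l := by omega
    have hl1 : 1 < l := by omega
    obtain ⟨rfl, rfl⟩ : i = ⟨0, hl0⟩ ∧ j = ⟨1, hl1⟩ := by simp only [Fin.ext_iff]; omega
    right
    rcases hσ with rfl | rfl <;> rcases hτ with rfl | rfl <;> norm_num at hδ
    · left; module
    · right; module
  · rcases hσ with rfl | rfl <;> norm_num at hδ
  · omega
  · left
    have h0 : ∀ c : Fin l, 2 ≤ (c : ℕ) → c ≠ ⟨0, by omega⟩ :=
      fun c hc => (ne_of_val_lt_two (by simp) hc).symm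
    have h1 : ∀ c : Fin l, 2 ≤ (c : ℕ) → c ≠ ⟨1, by omega⟩ :=
      fun c hc => (ne_of_val_lt_two (by simp) hc).symm
    rw [ip_smul_add_smul]
    simp [ev_apply, h0 i (by omega), h0 j (by omega), h1 i (by omega), h1 j (by omega)]

def reflect (α : Fin l → ℚ) (h : ip α α = 2) : (Fin l → ℚ) ≃ₗ[ℚ] (Fin l → ℚ) :=
  Module.reflection (f := dotProductEquiv ℚ (Fin l) α) h

lemma reflect_apply (α : Fin l → ℚ) (h : ip α α = 2) (x : Fin l → ℚ) :
    reflect α h x = x - ip α x • α :=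
  Module.reflection_apply _ h

lemma reflect_mem_W0D (hl : 4 ≤ l) {α : Fin l → ℚ} (hα : α ∈ Phi0D l hl) :
    reflect α (ip_self_of_mem_PhiD hα.1) ∈ W0D l hl := by
  refine Subgroup.subset_closure ⟨α, hα, fun x => ?_⟩
  rw [reflect_apply, ip_self_of_mem_PhiD hα.1, ip_comm]
  congr 2
  ring

/-- `transp i i = 1`, so that `transp_ev` holds without side condition. -/
def transp (i j : Fin l) : (Fin l → ℚ) ≃ₗ[ℚ] (Fin l → ℚ) :=
  if h : i = j then 1 else reflect (ev i - ev j) (ip_self_of_mem_PhiD (ev_sub_ev_mem_PhiD h))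

lemma transp_ev (i j c : Fin l) : transp i j (ev c) = ev (Equiv.swap i j c) := by
  unfold transp
  split_ifs with h
  · subst h; simp
  · rw [reflect_apply, ip_ev_right]
    simp only [Pi.sub_apply, ev_apply, Equiv.swap_apply_def]
    by_cases hci : c = i
    · subst hci; simp [h]
    · by_cases hcj : c = j
      · subst hcj; simp [hci]
      · simp [hci, hcj]

lemma transp_mem_W0D (hl : 4 ≤ l) {i j : Fin l} (h : deltaD l hl i = deltaD l hl j) :
    transp i j ∈ W0D l hl := by
  unfold transp
  split_ifs with hij
  · exact one_mem _
  · refine reflect_mem_W0D hl ⟨ev_sub_ev_mem_PhiD hij, ?_⟩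
    rw [ip_comm, ip_eq_dotProduct, dotProduct_sub]
    simp [ev, h]

def signChange (i j : Fin l) (h : i ≠ j) : (Fin l → ℚ) ≃ₗ[ℚ] (Fin l → ℚ) :=
  transp i j * reflect (ev i + ev j) (ip_self_of_mem_PhiD (ev_add_ev_mem_PhiD h))

lemma signChange_ev (i j c : Fin l) (h : i ≠ j) :
    signChange i j h (ev c) = if c = i ∨ c = j then -ev c else ev c := by
  rw [signChange, LinearEquiv.mul_apply, reflect_apply, ip_ev_right]
  simp only [Pi.add_apply, ev_apply, map_sub, map_smul, map_add, transp_ev]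
  by_cases hci : c = i
  · subst hci; simp [h]
  · by_cases hcj : c = j
    · subst hcj; simp [hci]
    · simp [hci, hcj, Equiv.swap_apply_of_ne_of_ne]

lemma signChange_mem_W0D (hl : 4 ≤ l) {i j : Fin l} (h : i ≠ j) (hi : 2 ≤ (i : ℕ))
    (hj : 2 ≤ (j : ℕ)) : signChange i j h ∈ W0D l hl := by
  refine mul_mem (transp_mem_W0D hl (deltaD_eq_of_two_le hl hi hj))
    (reflect_mem_W0D hl ⟨ev_add_ev_mem_PhiD h, ?_⟩)
  rw [ip_comm, ip_eq_dotProduct, dotProduct_add]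
  simp [ev, deltaD_apply, show ¬ (i : ℕ) < 2 by omega, show ¬ (j : ℕ) < 2 by omega]

lemma sq_ip_apply_of_mem_W0D (hl : 4 ≤ l) {w : (Fin l → ℚ) ≃ₗ[ℚ] (Fin l → ℚ)}
    (hw : w ∈ W0D l hl) (v : Fin l → ℚ) :
    ip (w v) (ev ⟨0, by omega⟩ - ev ⟨1, by omega⟩) ^ 2 =
      ip v (ev ⟨0, by omega⟩ - ev ⟨1, by omega⟩) ^ 2 := by
  induction hw using Subgroup.closure_induction generalizing v with
  | mem g hg =>
    obtain ⟨α, hα, hg⟩ := hg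
    have hγ : ip (ev ⟨0, by omega⟩ - ev ⟨1, by omega⟩)
        (ev ⟨0, by omega⟩ - ev (⟨1, by omega⟩ : Fin l)) = 2 :=
      ip_self_of_mem_PhiD (ev_sub_ev_mem_PhiD (by simp))
    rw [hg, ip_self_of_mem_PhiD hα.1, ip_sub_smul]
    rcases ip_eq_zero_or_eq_or_eq_neg_of_mem_Phi0D hl hα with h | rfl | rfl
    · rw [h]; ring
    · rw [hγ]; ring
    · simp only [ip_eq_dotProduct, neg_dotProduct, dotProduct_neg] at hγ ⊢
      rw [hγ]; ring
  | one => rfl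
  | mul x y _ _ hx hy => exact (hx (y v)).trans (hy v)
  | inv x _ hx => simpa using (hx (x⁻¹ v)).symm

def pairSameHead (a k : Fin l) : Set (Fin l → ℚ) := {ev a + ev k, ev a - ev k}

def pairDistinctHeads (hl : 4 ≤ l) (k m : Fin l) (ε τ : ℚ) : Set (Fin l → ℚ) :=
  {ev ⟨0, by omega⟩ + ε • ev k, ev ⟨1, by omega⟩ + τ • ev m}

lemma pair_mem_OrthPairsD (hl : 4 ≤ l) {u v : Fin l → ℚ} (hu : u ∈ Phi1D l hl)
    (hv : v ∈ Phi1D l hl) (huv : u ≠ v) (h : ip u v = 0) : {u, v} ∈ OrthPairsD l hl := by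
  refine ⟨Set.insert_subset hu (Set.singleton_subset_iff.mpr hv), Set.ncard_pair huv, ?_⟩
  rintro x (rfl | rfl) y (rfl | rfl) hxy
  · exact absurd rfl hxy
  · exact h
  · rwa [ip_comm]
  · exact absurd rfl hxy

lemma pairSameHead_mem_OrthPairsD (hl : 4 ≤ l) {a k : Fin l} (ha : (a : ℕ) < 2)
    (hk : 2 ≤ (k : ℕ)) : pairSameHead a k ∈ OrthPairsD l hl := by
  have hak := ne_of_val_lt_two ha hk
  have hpair : pairSameHead a k = {ev a + (1 : ℚ) • ev k, ev a + (-1 : ℚ) • ev k} := by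
    simp [pairSameHead, sub_eq_add_neg]
  rw [hpair]
  refine pair_mem_OrthPairsD hl ((mem_Phi1D_iff hl).2 ⟨a, k, 1, ha, hk, by simp, by simp⟩)
    ((mem_Phi1D_iff hl).2 ⟨a, k, -1, ha, hk, by simp, by simp⟩) (fun h => ?_) ?_
  · have hk := congrFun h k
    norm_num [ev_apply, hak.symm] at hk
  · rw [ip_ev_add_smul_ev hak hak.symm]
    norm_num

lemma pairDistinctHeads_mem_OrthPairsD (hl : 4 ≤ l) {k m : Fin l} (hk : 2 ≤ (k : ℕ))
    (hm : 2 ≤ (m : ℕ)) (hkm : k ≠ m) {ε τ : ℚ} (hε : ε = 1 ∨ ε = -1) (hτ : τ = 1 ∨ τ = -1) :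
    pairDistinctHeads hl k m ε τ ∈ OrthPairsD l hl := by
  have h0m := ne_of_val_lt_two (a := ⟨0, by omega⟩) (by simp) hm
  have h0k := ne_of_val_lt_two (a := ⟨0, by omega⟩) (by simp) hk
  have h1k := ne_of_val_lt_two (a := ⟨1, by omega⟩) (by simp) hk
  refine pair_mem_OrthPairsD hl ((mem_Phi1D_iff hl).2 ⟨_, k, ε, by simp, hk, hε, rfl⟩)
    ((mem_Phi1D_iff hl).2 ⟨_, m, τ, by simp, hm, hτ, rfl⟩) (fun h => ?_) ?_
  · have h0 := congrFun h ⟨0, by omega⟩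
    simp [ev_apply, h0m, h0k] at h0
  · rw [ip_ev_add_smul_ev h0m h1k.symm]
    simp [hkm]

lemma eq_pairSameHead_or_eq_pairDistinctHeads (hl : 4 ≤ l) {S : Set (Fin l → ℚ)}
    (hS : S ∈ OrthPairsD l hl) :
    (∃ a k : Fin l, (a : ℕ) < 2 ∧ 2 ≤ (k : ℕ) ∧ S = pairSameHead a k) ∨
    (∃ (k m : Fin l) (ε τ : ℚ), 2 ≤ (k : ℕ) ∧ 2 ≤ (m : ℕ) ∧ k ≠ m ∧
      (ε = 1 ∨ ε = -1) ∧ (τ = 1 ∨ τ = -1) ∧ S = pairDistinctHeads hl k m ε τ) := by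
  obtain ⟨hsub, hcard, horth⟩ := hS
  obtain ⟨u, v, huv, rfl⟩ := Set.ncard_eq_two.mp hcard
  obtain ⟨a, k, ε, ha, hk, hε, rfl⟩ := (mem_Phi1D_iff hl).1 (hsub (Set.mem_insert _ _))
  obtain ⟨b, m, τ, hb, hm, hτ, rfl⟩ :=
    (mem_Phi1D_iff hl).1 (hsub (Set.mem_insert_of_mem _ rfl))
  have hip := horth _ (Set.mem_insert _ _) _ (Set.mem_insert_of_mem _ rfl) huv
  rw [ip_ev_add_smul_ev (ne_of_val_lt_two ha hm) (ne_of_val_lt_two hb hk).symm] at hip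
  by_cases hab : a = b
  · subst hab
    by_cases hkm : k = m
    · subst hkm
      left
      refine ⟨a, k, ha, hk, ?_⟩
      rcases hε with rfl | rfl <;> rcases hτ with rfl | rfl <;> norm_num at hip
      · simp [pairSameHead, sub_eq_add_neg]
      · simp [pairSameHead, sub_eq_add_neg, Set.pair_comm]
    · simp [hkm] at hip
  · have hkm : k ≠ m := by
      rintro rfl
      rcases hε with rfl | rfl <;> rcases hτ with rfl | rfl <;> simp [hab] at hip
    right
    have hab' : (a : ℕ) ≠ b := Fin.val_ne_of_ne hab
    have hl0 : 0 < l := by omega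
    have hl1 : 1 < l := by omega
    obtain ⟨rfl, rfl⟩ | ⟨rfl, rfl⟩ :
        (a = ⟨0, hl0⟩ ∧ b = ⟨1, hl1⟩) ∨ (a = ⟨1, hl1⟩ ∧ b = ⟨0, hl0⟩) := by
      simp only [Fin.ext_iff]; omega
    · exact ⟨k, m, ε, τ, hk, hm, hkm, hε, hτ, rfl⟩
    · exact ⟨m, k, τ, ε, hm, hk, hkm.symm, hτ, hε, Set.pair_comm _ _⟩

lemma sameW0OrbitD_pair (hl : 4 ≤ l) {w : (Fin l → ℚ) ≃ₗ[ℚ] (Fin l → ℚ)} (hw : w ∈ W0D l hl)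
    {u v u' v' : Fin l → ℚ} (hu : w u = u') (hv : w v = v') :
    SameW0OrbitD l hl {u, v} {u', v'} :=
  ⟨w, hw, by rw [Set.image_pair, hu, hv]⟩

lemma sameW0OrbitD_pairSameHead (hl : 4 ≤ l) {a k : Fin l} (ha : (a : ℕ) < 2)
    (hk : 2 ≤ (k : ℕ)) :
    SameW0OrbitD l hl (pairSameHead ⟨0, by omega⟩ ⟨2, by omega⟩) (pairSameHead a k) := by
  set w := transp ⟨2, by omega⟩ k * transp ⟨0, by omega⟩ a
  have hw : w ∈ W0D l hl := mul_mem (transp_mem_W0D hl (deltaD_eq_of_two_le hl le_rfl hk))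
    (transp_mem_W0D hl (by simp [deltaD_apply, ha]))
  have h2a : (⟨2, by omega⟩ : Fin l) ≠ a := (ne_of_val_lt_two ha le_rfl).symm
  have hak : a ≠ k := ne_of_val_lt_two ha hk
  have hw0 : w (ev ⟨0, by omega⟩) = ev a := by
    simp [w, transp_ev, Equiv.swap_apply_of_ne_of_ne h2a.symm hak]
  have hw2 : w (ev ⟨2, by omega⟩) = ev k := by
    simp [w, transp_ev,
      Equiv.swap_apply_of_ne_of_ne (show (⟨2, by omega⟩ : Fin l) ≠ ⟨0, by omega⟩ by simp) h2a]
  exact sameW0OrbitD_pair hl hw (by rw [map_add, hw0, hw2]) (by rw [map_sub, hw0, hw2])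

lemma exists_mem_W0D_ev_two_three (hl : 4 ≤ l) {k m : Fin l} (hk : 2 ≤ (k : ℕ))
    (hm : 2 ≤ (m : ℕ)) (hkm : k ≠ m) :
    ∃ w ∈ W0D l hl, w (ev ⟨0, by omega⟩) = ev ⟨0, by omega⟩ ∧
      w (ev ⟨1, by omega⟩) = ev ⟨1, by omega⟩ ∧ w (ev ⟨2, by omega⟩) = ev k ∧
      w (ev ⟨3, by omega⟩) = ev m := by
  -- `transp 2 k` sends `e_{m'}` to `e_m`, and `m' ≠ 2`, so `transp 3 m'` fixes `e₂`.
  set m' := Equiv.swap ⟨2, by omega⟩ k m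
  have hm' : 2 ≤ (m' : ℕ) := by
    simp only [m', Equiv.swap_apply_def]
    split_ifs <;> simp [hk, hm]
  have hm'2 : m' ≠ ⟨2, by omega⟩ := by
    simpa [m', Equiv.swap_apply_eq_iff] using hkm.symm
  refine ⟨transp ⟨2, by omega⟩ k * transp ⟨3, by omega⟩ m',
    mul_mem (transp_mem_W0D hl (deltaD_eq_of_two_le hl le_rfl hk))
      (transp_mem_W0D hl (deltaD_eq_of_two_le hl (by simp) hm')), ?_, ?_, ?_, ?_⟩ <;>
    simp only [LinearEquiv.mul_apply, transp_ev] <;> congr 1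
  · rw [Equiv.swap_apply_of_ne_of_ne (by simp) (ne_of_val_lt_two (by simp) hm'),
      Equiv.swap_apply_of_ne_of_ne (by simp) (ne_of_val_lt_two (by simp) hk)]
  · rw [Equiv.swap_apply_of_ne_of_ne (by simp) (ne_of_val_lt_two (by simp) hm'),
      Equiv.swap_apply_of_ne_of_ne (by simp) (ne_of_val_lt_two (by simp) hk)]
  · rw [Equiv.swap_apply_of_ne_of_ne (by simp) hm'2.symm, Equiv.swap_apply_left]
  · rw [Equiv.swap_apply_left, Equiv.swap_apply_self]

lemma exists_two_le_ne_ne (hl5 : 5 ≤ l) (k m : Fin l) :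
    ∃ p : Fin l, 2 ≤ (p : ℕ) ∧ p ≠ k ∧ p ≠ m := by
  by_contra! h
  have h2 := h ⟨2, by omega⟩
  have h3 := h ⟨3, by omega⟩
  have h4 := h ⟨4, by omega⟩
  simp [Fin.ext_iff] at h2 h3 h4
  omega

lemma exists_mem_W0D_signs (hl : 4 ≤ l) (hl5 : 5 ≤ l) {k m : Fin l} (hk : 2 ≤ (k : ℕ))
    (hm : 2 ≤ (m : ℕ)) (hkm : k ≠ m) {ε τ : ℚ} (hε : ε = 1 ∨ ε = -1) (hτ : τ = 1 ∨ τ = -1) :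
    ∃ w ∈ W0D l hl, w (ev ⟨0, by omega⟩) = ev ⟨0, by omega⟩ ∧
      w (ev ⟨1, by omega⟩) = ev ⟨1, by omega⟩ ∧ w (ev k) = ε • ev k ∧ w (ev m) = τ • ev m := by
  obtain ⟨p, hp, hpk, hpm⟩ := exists_two_le_ne_ne hl5 k m
  have h0 : ∀ c : Fin l, 2 ≤ (c : ℕ) → (⟨0, by omega⟩ : Fin l) ≠ c :=
    fun c hc => ne_of_val_lt_two (by simp) hc
  have h1 : ∀ c : Fin l, 2 ≤ (c : ℕ) → (⟨1, by omega⟩ : Fin l) ≠ c :=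
    fun c hc => ne_of_val_lt_two (by simp) hc
  rcases hε with rfl | rfl <;> rcases hτ with rfl | rfl
  · exact ⟨1, one_mem _, by simp⟩
  · refine ⟨signChange m p hpm.symm, signChange_mem_W0D hl _ hm hp, ?_⟩
    simp [signChange_ev, h0, h1, hm, hp, hkm, hpk.symm]
  · refine ⟨signChange k p hpk.symm, signChange_mem_W0D hl _ hk hp, ?_⟩
    simp [signChange_ev, h0, h1, hk, hp, hkm.symm, hpm.symm]
  · refine ⟨signChange k m hkm, signChange_mem_W0D hl _ hk hm, ?_⟩
    simp [signChange_ev, h0, h1, hk, hm]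

lemma sameW0OrbitD_pairDistinctHeads (hl : 4 ≤ l) (hl5 : 5 ≤ l) {k m : Fin l}
    (hk : 2 ≤ (k : ℕ)) (hm : 2 ≤ (m : ℕ)) (hkm : k ≠ m) {ε τ : ℚ} (hε : ε = 1 ∨ ε = -1)
    (hτ : τ = 1 ∨ τ = -1) :
    SameW0OrbitD l hl (pairDistinctHeads hl ⟨2, by omega⟩ ⟨3, by omega⟩ 1 1)
      (pairDistinctHeads hl k m ε τ) := by
  obtain ⟨π, hπ, hπ0, hπ1, hπ2, hπ3⟩ := exists_mem_W0D_ev_two_three hl hk hm hkm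
  obtain ⟨ς, hς, hς0, hς1, hςk, hςm⟩ := exists_mem_W0D_signs hl hl5 hk hm hkm hε hτ
  refine sameW0OrbitD_pair hl (mul_mem hς hπ) ?_ ?_ <;>
    simp [LinearEquiv.mul_apply, hπ0, hπ1, hπ2, hπ3, hς0, hς1, hςk, hςm]

lemma add_eq_add_of_image_pair {α β : Type*} [AddCommMagma β] {f : α → β} {a b : α} {c d : β}
    (h : f '' {a, b} = {c, d}) : f a + f b = c + d := by
  rw [Set.image_pair, Set.pair_eq_pair_iff] at h
  rcases h with ⟨rfl, rfl⟩ | ⟨rfl, rfl⟩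
  · rfl
  · exact add_comm _ _

lemma not_sameW0OrbitD_pairSameHead_pairDistinctHeads (hl : 4 ≤ l) :
    ¬ SameW0OrbitD l hl (pairSameHead ⟨0, by omega⟩ ⟨2, by omega⟩)
      (pairDistinctHeads hl ⟨2, by omega⟩ ⟨3, by omega⟩ 1 1) := by
  rintro ⟨w, hw, h⟩
  have hsum := add_eq_add_of_image_pair h
  rw [← map_add] at hsum
  have hsq := hsum ▸ sq_ip_apply_of_mem_W0D hl hw _
  norm_num [ip_eq_dotProduct, dotProduct_sub, ev, Pi.single_apply, Fin.ext_iff] at hsq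

/-- For `D_l`, `l ≥ 5`, the action of `W₀` on 2-element orthogonal
subsets of `Φ₁` has exactly two orbits: there are two non-equivalent such subsets,
and every such subset is equivalent to one of them. -/
theorem W0_two_orbits_on_orthogonal_pairs_Dl (l : ℕ) (hl5 : 5 ≤ l) (hl : 4 ≤ l) :
    ∃ A B : Set (Fin l → ℚ),
      A ∈ OrthPairsD l hl ∧ B ∈ OrthPairsD l hl ∧
      ¬ SameW0OrbitD l hl A B ∧
      ∀ S ∈ OrthPairsD l hl,
        SameW0OrbitD l hl A S ∨ SameW0OrbitD l hl B S := by
  refine ⟨pairSameHead ⟨0, by omega⟩ ⟨2, by omega⟩,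
    pairDistinctHeads hl ⟨2, by omega⟩ ⟨3, by omega⟩ 1 1,
    pairSameHead_mem_OrthPairsD hl (by simp) le_rfl,
    pairDistinctHeads_mem_OrthPairsD hl le_rfl (by simp) (by simp) (by simp) (by simp),
    not_sameW0OrbitD_pairSameHead_pairDistinctHeads hl, fun S hS => ?_⟩
  rcases eq_pairSameHead_or_eq_pairDistinctHeads hl hS with
    ⟨a, k, ha, hk, rfl⟩ | ⟨k, m, ε, τ, hk, hm, hkm, hε, hτ, rfl⟩
  · exact Or.inl (sameW0OrbitD_pairSameHead hl ha hk)
  · exact Or.inr (sameW0OrbitD_pairDistinctHeads hl hl5 hk hm hkm hε hτ)
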